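/- Let χ be an (r+1)-signotope on [n] with block partition [n] = C₁ ∪ ... ∪ C_r. Then the induced grid orientation O_χ on C₁ × ... × C_r is a unique sink orientation: every subgrid C₁' × ... × C_r' (with ∅ ≠ C_i' ⊆ C_i) contains exactly one sink. -/

import Mathlib

/-- Number of sign changes in a list of signs (`true` = `+`, `false` = `-`). -/
def signChanges (l : List Bool) : Nat :=
  (l.zip l.tail).countP (fun p => p.1 != p.2)

/-- The sequence of signs obtained from the set `A` by applying `χ` to `A` minus each of its
elements, deleted in increasing order. -/
def delSeq (chi : Finset Nat -> Bool) (A : Finset Nat) : List Bool :=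
  (List.range A.card).map (fun i => chi (((A.sort (fun a b => a <= b)).eraseIdx i).toFinset))

/-- `chi` is an `r`-signotope on ground set `S`: it is a sign map on `r`-subsets such that for
every `(r+1)`-subset `A ⊆ S` the sign sequence `delSeq chi A` has at most one sign change. -/
def IsSignotopeOn (r : Nat) (S : Finset Nat) (chi : Finset Nat -> Bool) : Prop :=
  forall A : Finset Nat, A ⊆ S -> A.card = r + 1 -> signChanges (delSeq chi A) <= 1
/-- `C 0, ..., C (r-1)` is a block partition of `[n] = {1, ..., n}`. -/
def IsBlockPartition (n r : Nat) (C : Fin r -> Finset Nat) : Prop :=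
  Finset.univ.biUnion C = Finset.Icc 1 n ∧
    ∀ i j : Fin r, i < j -> ∀ c ∈ C i, ∀ c' ∈ C j, c < c'

/-- The orientation `O_χ` induced by a block signotope: `blockDir chi C v w` means that both `v`
and `w` are grid vertices (of the grid `C 0 × ⋯ × C (r-1)`), they differ in exactly one
coordinate `i`, and the edge between them is directed from `v` to `w` according to the sign of
`chi` on the `(r+1)`-set consisting of all entries of `v` together with `w i`. -/
def blockDir {r : Nat} (chi : Finset Nat -> Bool) (C : Fin r -> Finset Nat)
    (v w : Fin r -> Nat) : Prop :=
  (∀ j, v j ∈ C j) ∧ (∀ j, w j ∈ C j) ∧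
    ∃ i, (∀ j, j ≠ i -> v j = w j) ∧
      ((v i < w i ∧ chi (insert (w i) (Finset.image v Finset.univ)) = true) ∨
       (w i < v i ∧ chi (insert (w i) (Finset.image v Finset.univ)) = false))

/-- Two tuples are adjacent in the grid iff they differ in exactly one coordinate. -/
def NatAdj {r : Nat} (v w : Fin r -> Nat) : Prop :=
  ∃ i, v i ≠ w i ∧ ∀ j, j ≠ i -> v j = w j

/-- `v` is a sink of the subgrid `S` of `O_χ`: all edges of the subgrid at `v` are incoming. -/
def IsBlockSink {r : Nat} (chi : Finset Nat -> Bool) (C : Fin r -> Finset Nat)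
    (S : Fin r -> Finset Nat) (v : Fin r -> Nat) : Prop :=
  (∀ i, v i ∈ S i) ∧ ∀ w, (∀ i, w i ∈ S i) -> NatAdj v w -> blockDir chi C w v

/-!
Induction on the number of blocks. Fixing the last coordinate `d` of a vertex leaves the grid of
the other blocks, oriented by the contracted signotope `X ↦ χ (X ∪ {d})`, which by induction has
a unique sink `z_d`. For `a ≠ b` in the last block, `χ ({a, b} ∪ z_b) = +` forces
`χ ({a, b} ∪ u) = +` at every vertex `u`: walk from `u` to `z_b` along edges leaving the current
vertex (one exists, since `z_b` is the unique sink of the subcube spanned by the current vertex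
and `z_b`); each step is a single signotope triple. So "`χ ({a, b} ∪ u) = +` for all `u`" is a
tournament on the last block, transitive by the signotope condition, and the sinks of the grid are
exactly the vertices `(z_d, d)` with `d` the sink of this tournament.
-/

open Finset

lemma signChanges_cons_cons (a b : Bool) (l : List Bool) :
    signChanges (a :: b :: l) = (if a = b then 0 else 1) + signChanges (b :: l) := by
  simp only [signChanges, List.tail, List.zip_cons_cons, List.countP_cons]
  cases a <;> cases b <;> simp <;> omega

lemma signChanges_cons_le_cons_cons (x a : Bool) (l : List Bool) :
    signChanges (x :: l) ≤ signChanges (x :: a :: l) := by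
  cases l with
  | nil => simp [signChanges]
  | cons b t =>
    simp only [signChanges_cons_cons]
    cases x <;> cases a <;> cases b <;> simp <;> omega

lemma signChanges_le_cons (a : Bool) (l : List Bool) :
    signChanges l ≤ signChanges (a :: l) := by
  cases l with
  | nil => simp [signChanges]
  | cons b t => rw [signChanges_cons_cons]; omega

lemma signChanges_cons_le_of_sublist {l₁ l₂ : List Bool} (h : l₁.Sublist l₂) (x : Bool) :
    signChanges (x :: l₁) ≤ signChanges (x :: l₂) := by
  induction h generalizing x with
  | slnil => rfl
  | cons a _ ih => exact (ih x).trans (signChanges_cons_le_cons_cons x a _)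
  | cons_cons a _ ih => simpa only [signChanges_cons_cons] using Nat.add_le_add_left (ih a) _

lemma List.Sublist.signChanges_le {l₁ l₂ : List Bool} (h : l₁.Sublist l₂) :
    signChanges l₁ ≤ signChanges l₂ := by
  induction h with
  | slnil => rfl
  | cons a _ ih => exact ih.trans (signChanges_le_cons a _)
  | cons_cons a h _ => exact signChanges_cons_le_of_sublist h a

lemma delSeq_eq_map (chi : Finset ℕ → Bool) (A : Finset ℕ) :
    delSeq chi A = (A.sort (· ≤ ·)).map (fun a => chi (A.erase a)) := by
  have hlen : (A.sort (· ≤ ·)).length = A.card := Finset.length_sort _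
  refine List.ext_getElem (by simp [delSeq, hlen]) fun i h _ => ?_
  simp only [delSeq, List.getElem_map, List.getElem_range]
  rw [← (A.sort_nodup _).erase_getElem i (by simpa [delSeq, hlen] using h)]
  congr 1; ext a
  simp [(A.sort_nodup _).mem_erase_iff]

lemma List.Pairwise.sublist_sort {α : Type*} [LinearOrder α] {l : List α} {A : Finset α}
    (hl : l.Pairwise (· < ·)) (hA : ∀ a ∈ l, a ∈ A) : l.Sublist (A.sort (· ≤ ·)) :=
  List.sublist_of_subperm_of_pairwise (r := (· ≤ ·))
    (List.Nodup.subperm (hl.imp ne_of_lt) fun a ha => (A.mem_sort _).2 (hA a ha))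
    (hl.imp le_of_lt) (A.pairwise_sort _)

namespace IsSignotopeOn

variable {r : ℕ} {U : Finset ℕ} {chi : Finset ℕ → Bool}

lemma mono (H : IsSignotopeOn r U chi) {V : Finset ℕ} (hV : V ⊆ U) : IsSignotopeOn r V chi :=
  fun A hA hcard => H A (hA.trans hV) hcard

lemma contract (H : IsSignotopeOn (r + 1) U chi) {d : ℕ} (hd : d ∈ U) :
    IsSignotopeOn r (U.erase d) (fun X => chi (insert d X)) := by
  intro A hA hcard
  have hdA : d ∉ A := fun h => (mem_erase.1 (hA h)).1 rfl
  have hsub : (A.sort (· ≤ ·)).Sublist ((insert d A).sort (· ≤ ·)) :=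
    ((A.sortedLT_sort).pairwise).sublist_sort fun a ha => mem_insert_of_mem ((A.mem_sort _).1 ha)
  refine le_trans ?_ (H (insert d A) (insert_subset hd fun a ha => mem_of_mem_erase (hA ha))
    (by rw [card_insert_of_notMem hdA, hcard]))
  rw [delSeq_eq_map, delSeq_eq_map]
  refine le_of_eq_of_le ?_ (hsub.map _).signChanges_le
  refine congrArg signChanges (List.map_congr_left fun a ha => ?_)
  rw [erase_insert_of_ne (ne_of_mem_of_not_mem ((A.mem_sort _).1 ha) hdA).symm]

lemma erase_eq_of_lt_of_lt (H : IsSignotopeOn r U chi) {A : Finset ℕ} (hA : A ⊆ U)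
    (hcard : A.card = r + 1) {x y z : ℕ} (hx : x ∈ A) (hy : y ∈ A) (hz : z ∈ A)
    (hxy : x < y) (hyz : y < z) (h : chi (A.erase x) = chi (A.erase z)) :
    chi (A.erase y) = chi (A.erase x) := by
  have hsub : [x, y, z].Sublist (A.sort (· ≤ ·)) :=
    List.Pairwise.sublist_sort (by simp; omega) (by simp [hx, hy, hz])
  have h3 := ((hsub.map fun a => chi (A.erase a)).signChanges_le).trans
    ((delSeq_eq_map chi A) ▸ H A hA hcard)
  revert h3 h
  simp only [List.map_cons, List.map_nil]
  cases chi (A.erase x) <;> cases chi (A.erase y) <;> cases chi (A.erase z) <;> decide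

lemma erase_eq_true_of_erase_eq_true (H : IsSignotopeOn r U chi) {A : Finset ℕ} (hA : A ⊆ U)
    (hcard : A.card = r + 1) {x y f : ℕ} (hx : x ∈ A) (hy : y ∈ A) (hf : f ∈ A)
    (hxf : x < f) (hyf : y < f) (hxt : chi (A.erase x) = true)
    (hedge : (y < x ∧ chi (A.erase f) = false) ∨ (x < y ∧ chi (A.erase f) = true)) :
    chi (A.erase y) = true := by
  rcases hedge with ⟨hyx, hff⟩ | ⟨hxy, hft⟩
  · by_contra hyt
    have := H.erase_eq_of_lt_of_lt hA hcard hy hx hf hyx hxf (by simpa [hff] using hyt)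
    simp_all
  · rw [H.erase_eq_of_lt_of_lt hA hcard hx hy hf hxy hyf (hxt.trans hft.symm), hxt]

lemma insert_eq_of_lt_of_lt (H : IsSignotopeOn r U chi) {X : Finset ℕ} {x y z : ℕ}
    (hU : insert x (insert y (insert z X)) ⊆ U) (hcard : X.card + 2 = r)
    (hxX : x ∉ X) (hyX : y ∉ X) (hzX : z ∉ X) (hxy : x < y) (hyz : y < z)
    (h : chi (insert y (insert z X)) = chi (insert x (insert y X))) :
    chi (insert x (insert z X)) = chi (insert y (insert z X)) := by
  have hyzX : y ∉ insert z X := by simp [hyX, hyz.ne]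
  have hxyzX : x ∉ insert y (insert z X) := by simp [hxX, hxy.ne, (hxy.trans hyz).ne]
  have hcardA : (insert x (insert y (insert z X))).card = r + 1 := by
    rw [card_insert_of_notMem hxyzX, card_insert_of_notMem hyzX, card_insert_of_notMem hzX]
    omega
  have ex : (insert x (insert y (insert z X))).erase x = insert y (insert z X) :=
    erase_insert hxyzX
  have ey : (insert x (insert y (insert z X))).erase y = insert x (insert z X) := by
    rw [erase_insert_of_ne hxy.ne, erase_insert hyzX]
  have ez : (insert x (insert y (insert z X))).erase z = insert x (insert y X) := by
    rw [erase_insert_of_ne (hxy.trans hyz).ne, erase_insert_of_ne hyz.ne, erase_insert hzX]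
  have := H.erase_eq_of_lt_of_lt hU hcardA (by simp) (by simp) (by simp) hxy hyz
    (by rw [ex, ez, h])
  rwa [ex, ey] at this

end IsSignotopeOn

def BlocksSorted {k : ℕ} (S : Fin k → Finset ℕ) : Prop :=
  ∀ i j : Fin k, i < j → ∀ x ∈ S i, ∀ y ∈ S j, x < y

namespace BlocksSorted

variable {k : ℕ} {S : Fin k → Finset ℕ}

lemma mono (hS : BlocksSorted S) {P : Fin k → Finset ℕ} (hP : ∀ i, P i ⊆ S i) :
    BlocksSorted P :=
  fun i j hij x hx y hy => hS i j hij x (hP i hx) y (hP j hy)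

lemma strictMono (hS : BlocksSorted S) {v : Fin k → ℕ} (hv : ∀ i, v i ∈ S i) : StrictMono v :=
  fun i j hij => hS i j hij _ (hv i) _ (hv j)

lemma card_image (hS : BlocksSorted S) {v : Fin k → ℕ} (hv : ∀ i, v i ∈ S i) :
    (univ.image v).card = k := by
  rw [card_image_of_injective _ (hS.strictMono hv).injective, card_univ, Fintype.card_fin]

lemma notMem_image (hS : BlocksSorted S) {v : Fin k → ℕ} (hv : ∀ i, v i ∈ S i) {i : Fin k}
    {b : ℕ} (hb : b ∈ S i) (hbv : b ≠ v i) : b ∉ univ.image v := by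
  simp only [mem_image, mem_univ, true_and, not_exists]
  intro j hj
  rcases lt_trichotomy i j with hij | rfl | hji
  · exact (hS i j hij b hb _ (hv j)).ne' hj
  · exact hbv hj.symm
  · exact (hS j i hji _ (hv j) b hb).ne hj

lemma init {S : Fin (k + 1) → Finset ℕ} (hS : BlocksSorted S) : BlocksSorted (Fin.init S) :=
  fun i j hij => hS i.castSucc j.castSucc (Fin.castSucc_lt_castSucc_iff.2 hij)

lemma lt_last {S : Fin (k + 1) → Finset ℕ} (hS : BlocksSorted S) {d : ℕ}
    (hd : d ∈ S (Fin.last k)) : ∀ x ∈ univ.biUnion (Fin.init S), x < d := by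
  simp only [mem_biUnion, mem_univ, true_and, forall_exists_index]
  exact fun x j hx => hS j.castSucc _ (Fin.castSucc_lt_last j) x hx d hd

end BlocksSorted

lemma image_subset_biUnion {k : ℕ} {S : Fin k → Finset ℕ} {v : Fin k → ℕ}
    (hv : ∀ i, v i ∈ S i) : univ.image v ⊆ univ.biUnion S := by
  simp only [subset_iff, mem_image, mem_univ, true_and, mem_biUnion, forall_exists_index]
  rintro _ i rfl
  exact ⟨i, hv i⟩

lemma biUnion_init_subset {k : ℕ} (S : Fin (k + 1) → Finset ℕ) :
    univ.biUnion (Fin.init S) ⊆ univ.biUnion S :=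
  biUnion_subset.2 fun j _ => subset_biUnion_of_mem S (mem_univ j.castSucc)

lemma IsSignotopeOn.slice {k r : ℕ} {S : Fin (k + 1) → Finset ℕ} {chi : Finset ℕ → Bool}
    (H : IsSignotopeOn (r + 1) (univ.biUnion S) chi) (hS : BlocksSorted S) {d : ℕ}
    (hd : d ∈ S (Fin.last k)) :
    IsSignotopeOn r (univ.biUnion (Fin.init S)) (fun X => chi (insert d X)) :=
  (H.contract (mem_biUnion.2 ⟨_, mem_univ _, hd⟩)).mono fun x hx =>
    mem_erase.2 ⟨(hS.lt_last hd x hx).ne, biUnion_init_subset S hx⟩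

lemma insert_image_update {k : ℕ} (v : Fin k → ℕ) (i : Fin k) (b : ℕ) :
    insert (v i) (univ.image (Function.update v i b)) = insert b (univ.image v) := by
  ext x
  simp only [mem_insert, mem_image, mem_univ, true_and, Function.update_apply]
  grind

lemma image_eq_insert_init {k : ℕ} (v : Fin (k + 1) → ℕ) :
    univ.image v = insert (v (Fin.last k)) (univ.image (Fin.init v)) := by
  ext x
  simp [Fin.exists_fin_succ', Fin.init, or_comm, eq_comm]

/-- The local form of `IsBlockSink`: the edge between `v` and `update v i b` is decided by
`chi (insert b (univ.image v))`. -/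
def IsSink {k : ℕ} (chi : Finset ℕ → Bool) (S : Fin k → Finset ℕ) (v : Fin k → ℕ) : Prop :=
  ∀ i, v i ∈ S i ∧ ∀ b ∈ S i,
    (b < v i → chi (insert b (univ.image v)) = true) ∧
    (v i < b → chi (insert b (univ.image v)) = false)

namespace IsSink

variable {k : ℕ} {chi : Finset ℕ → Bool}

lemma mono {S P : Fin k → Finset ℕ} {v : Fin k → ℕ} (hv : IsSink chi S v)
    (hvP : ∀ i, v i ∈ P i) (hP : ∀ i, P i ⊆ S i) : IsSink chi P v :=
  fun i => ⟨hvP i, fun b hb => (hv i).2 b (hP i hb)⟩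

lemma mem {S : Fin k → Finset ℕ} {v : Fin k → ℕ} (hv : IsSink chi S v) (i : Fin k) :
    v i ∈ S i :=
  (hv i).1

end IsSink

lemma isSink_iff_init {k : ℕ} {chi : Finset ℕ → Bool} {S : Fin (k + 1) → Finset ℕ}
    {v : Fin (k + 1) → ℕ} :
    IsSink chi S v ↔
      IsSink (fun X => chi (insert (v (Fin.last k)) X)) (Fin.init S) (Fin.init v) ∧
      v (Fin.last k) ∈ S (Fin.last k) ∧ ∀ b ∈ S (Fin.last k),
        (b < v (Fin.last k) →
          chi (insert b (insert (v (Fin.last k)) (univ.image (Fin.init v)))) = true) ∧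
        (v (Fin.last k) < b →
          chi (insert b (insert (v (Fin.last k)) (univ.image (Fin.init v)))) = false) := by
  simp only [IsSink, Fin.forall_fin_succ' (P := fun i => v i ∈ S i ∧ _), image_eq_insert_init v,
    insert_comm _ (v (Fin.last k))]
  rfl

/-- `σ a b`, for `a < b`, says that the edge `{a, b}` of a tournament on `T ⊆ ℕ` points to `b`. -/
def IsTournamentSink (σ : ℕ → ℕ → Prop) (T : Finset ℕ) (d : ℕ) : Prop :=
  d ∈ T ∧ ∀ b ∈ T, (b < d → σ b d) ∧ (d < b → ¬σ d b)

lemma exists_isTournamentSink {σ : ℕ → ℕ → Prop} {T : Finset ℕ} (hT : T.Nonempty)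
    (htrans : ∀ a ∈ T, ∀ b ∈ T, ∀ c ∈ T, a < b → b < c → (σ a b ↔ σ b c) → (σ a c ↔ σ a b)) :
    ∃ d, IsTournamentSink σ T d := by
  induction T using Finset.induction_on_max with
  | empty => exact absurd hT (by simp)
  | insert m T hlt ih =>
    have htrans' : ∀ a ∈ T, ∀ b ∈ T, ∀ c ∈ T, a < b → b < c → (σ a b ↔ σ b c) →
        (σ a c ↔ σ a b) := fun a ha b hb c hc =>
      htrans a (mem_insert_of_mem ha) b (mem_insert_of_mem hb) c (mem_insert_of_mem hc)
    rcases T.eq_empty_or_nonempty with rfl | hTne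
    · exact ⟨m, by simp [IsTournamentSink]⟩
    obtain ⟨d, hdT, hd⟩ := ih hTne htrans'
    by_cases hdm : σ d m
    · refine ⟨m, mem_insert_self m T, fun b hb => ⟨fun hbm => ?_, fun hmb => ?_⟩⟩
      · rcases mem_insert.1 hb with rfl | hb
        · exact absurd hbm (lt_irrefl _)
        have hb' : b ∈ insert m T := mem_insert_of_mem hb
        have hd' : d ∈ insert m T := mem_insert_of_mem hdT
        rcases lt_trichotomy b d with hbd | rfl | hdb
        · exact (htrans b hb' d hd' m (mem_insert_self m T) hbd (hlt d hdT)
            (iff_of_true ((hd b hb).1 hbd) hdm)).2 ((hd b hb).1 hbd)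
        · exact hdm
        · by_contra hbm'
          exact (hd b hb).2 hdb ((htrans d hd' b hb' m (mem_insert_self m T) hdb hbm
            (iff_of_false ((hd b hb).2 hdb) hbm')).1 hdm)
      · rcases mem_insert.1 hb with rfl | hb
        · exact absurd hmb (lt_irrefl _)
        · exact absurd (hlt b hb) hmb.not_gt
    · refine ⟨d, mem_insert_of_mem hdT, fun b hb => ?_⟩
      rcases mem_insert.1 hb with rfl | hb
      · exact ⟨fun hmd => absurd (hlt d hdT) hmd.not_gt, fun _ => hdm⟩
      · exact hd b hb

lemma hammingDist_update_lt {ι β : Type*} [Fintype ι] [DecidableEq ι] [DecidableEq β]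
    {x y : ι → β} {i : ι} (h : x i ≠ y i) :
    hammingDist (Function.update x i (y i)) y < hammingDist x y := by
  refine card_lt_card ((ssubset_iff_of_subset fun j => ?_).2 ⟨i, by simp [h], by simp⟩)
  rcases eq_or_ne j i with rfl | hji <;> simp_all

def SinksUnique (k : ℕ) : Prop :=
  ∀ (S : Fin k → Finset ℕ) (chi : Finset ℕ → Bool), BlocksSorted S →
    IsSignotopeOn (k + 1) (univ.biUnion S) chi →
    ∀ v w, IsSink chi S v → IsSink chi S w → v = w

section Walk

variable {k : ℕ} {S : Fin k → Finset ℕ}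

lemma exists_outgoing_of_isSink (huniq : SinksUnique k) (hS : BlocksSorted S)
    {psi : Finset ℕ → Bool} (H : IsSignotopeOn (k + 1) (univ.biUnion S) psi)
    {u v : Fin k → ℕ} (hv : IsSink psi S v) (hu : ∀ i, u i ∈ S i) (huv : u ≠ v) :
    ∃ i, (v i < u i ∧ psi (insert (v i) (univ.image u)) = false) ∨
      (u i < v i ∧ psi (insert (v i) (univ.image u)) = true) := by
  -- otherwise `u` would be a second sink of the subcube spanned by `u` and `v`
  by_contra h
  simp only [not_exists, not_or, not_and, Bool.not_eq_false, Bool.not_eq_true] at h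
  set P : Fin k → Finset ℕ := fun i => {u i, v i}
  have hPS : ∀ i, P i ⊆ S i := fun i => insert_subset (hu i) (singleton_subset_iff.2 (hv.mem i))
  have hu' : IsSink psi P u := by
    refine fun i => ⟨mem_insert_self _ _, fun b hb => ?_⟩
    rcases mem_insert.1 hb with rfl | hb
    · exact ⟨fun h => absurd h (lt_irrefl _), fun h => absurd h (lt_irrefl _)⟩
    · rw [mem_singleton.1 hb]
      exact ⟨(h i).1, (h i).2⟩
  exact huv (huniq P psi (hS.mono hPS) (H.mono (biUnion_mono fun i _ => hPS i)) u v hu'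
    (hv.mono (fun i => by simp [P]) hPS))

/-- One step of the walk: a single signotope triple on `{u i, b, f}`. -/
lemma insert_insert_eq_true_of_update (hS : BlocksSorted S) {V : Finset ℕ}
    {chi : Finset ℕ → Bool} (H : IsSignotopeOn (k + 2) V chi) (hSV : univ.biUnion S ⊆ V)
    {e f : ℕ} (he : e ∈ V) (hf : f ∈ V) (hef : e ≠ f)
    (heS : ∀ x ∈ univ.biUnion S, x < e) (hfS : ∀ x ∈ univ.biUnion S, x < f)
    {u : Fin k → ℕ} (hu : ∀ i, u i ∈ S i) {i : Fin k} {b : ℕ} (hb : b ∈ S i)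
    (hedge : (b < u i ∧ chi (insert e (insert b (univ.image u))) = false) ∨
      (u i < b ∧ chi (insert e (insert b (univ.image u))) = true))
    (hwt : chi (insert f (insert e (univ.image (Function.update u i b)))) = true) :
    chi (insert f (insert e (univ.image u))) = true := by
  set w := Function.update u i b
  have hne : u i ≠ b := by rcases hedge with ⟨h, -⟩ | ⟨h, -⟩ <;> omega
  have hw : ∀ j, w j ∈ S j :=
    (Function.forall_update_iff u fun j x => x ∈ S j).2 ⟨hb, fun j _ => hu j⟩
  have hbU : b ∈ univ.biUnion S := mem_biUnion.2 ⟨i, mem_univ i, hb⟩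
  have huU : univ.image u ⊆ univ.biUnion S := image_subset_biUnion hu
  have huiU : u i ∈ univ.biUnion S := huU (mem_image_of_mem u (mem_univ i))
  have hbu : b ∉ univ.image u := hS.notMem_image hu hb hne.symm
  have huw : u i ∉ univ.image w := hS.notMem_image hw (hu i) (by simp [w, hne])
  have heA : e ∉ insert b (univ.image u) := by
    simp only [mem_insert, not_or]
    exact ⟨(heS b hbU).ne', fun heu => (heS e (huU heu)).false⟩
  have hfA : f ∉ insert e (insert b (univ.image u)) := by
    simp only [mem_insert, not_or]
    exact ⟨hef.symm, (hfS b hbU).ne', fun hfu => (hfS f (huU hfu)).false⟩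
  set A := insert f (insert e (insert b (univ.image u)))
  have hA : A = insert f (insert e (insert (u i) (univ.image w))) := by
    simp only [A, w, insert_image_update]
  have hAV : A ⊆ V :=
    insert_subset hf (insert_subset he (insert_subset (hSV hbU) (huU.trans hSV)))
  have hAcard : A.card = k + 2 + 1 := by
    rw [card_insert_of_notMem hfA, card_insert_of_notMem heA, card_insert_of_notMem hbu,
      hS.card_image hu]
  have hAu : A.erase (u i) = insert f (insert e (univ.image w)) := by
    rw [hA, erase_insert_of_ne (hfS _ huiU).ne', erase_insert_of_ne (heS _ huiU).ne',
      erase_insert huw]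
  have hAb : A.erase b = insert f (insert e (univ.image u)) := by
    rw [erase_insert_of_ne (hfS _ hbU).ne', erase_insert_of_ne (heS _ hbU).ne', erase_insert hbu]
  rw [← hAb]
  refine H.erase_eq_true_of_erase_eq_true hAV hAcard (by simp [hA]) (by simp [A]) (by simp [A])
    (hfS _ huiU) (hfS _ hbU) (hAu ▸ hwt) ?_
  rwa [erase_insert hfA]

/-- Along a walk from `u` to the sink `v` of the `e`-slice that follows edges leaving the current
vertex, the value of `chi` on `{e, f} ∪ ·` never changes from `false` to `true`. -/
theorem IsSink.insert_insert_eq_true (huniq : SinksUnique k) (hS : BlocksSorted S)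
    {V : Finset ℕ} {chi : Finset ℕ → Bool} (H : IsSignotopeOn (k + 2) V chi)
    (hSV : univ.biUnion S ⊆ V) {e f : ℕ} (he : e ∈ V) (hf : f ∈ V) (hef : e ≠ f)
    (heS : ∀ x ∈ univ.biUnion S, x < e) (hfS : ∀ x ∈ univ.biUnion S, x < f)
    {v : Fin k → ℕ} (hv : IsSink (fun X => chi (insert e X)) S v)
    (hvt : chi (insert f (insert e (univ.image v))) = true)
    {u : Fin k → ℕ} (hu : ∀ i, u i ∈ S i) : chi (insert f (insert e (univ.image u))) = true := by
  induction hd : hammingDist u v using Nat.strong_induction_on generalizing u with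
  | _ n ih =>
  rcases eq_or_ne u v with rfl | huv
  · exact hvt
  have hsig : IsSignotopeOn (k + 1) (univ.biUnion S) (fun X => chi (insert e X)) :=
    (H.contract he).mono fun x hx => mem_erase.2 ⟨(heS x hx).ne, hSV hx⟩
  obtain ⟨i, hedge⟩ := exists_outgoing_of_isSink huniq hS hsig hv hu huv
  have hne : u i ≠ v i := by rcases hedge with ⟨h, -⟩ | ⟨h, -⟩ <;> omega
  refine insert_insert_eq_true_of_update hS H hSV he hf hef heS hfS hu (hv.mem i) hedge ?_
  exact ih _ (hd ▸ hammingDist_update_lt hne)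
    ((Function.forall_update_iff u fun j x => x ∈ S j).2 ⟨hv.mem i, fun j _ => hu j⟩) rfl

end Walk

/-- `PairPositive chi (Fin.init S)` is the tournament on the last block whose sink is the last
coordinate of the sink of the grid `S`. -/
def PairPositive {k : ℕ} (chi : Finset ℕ → Bool) (S : Fin k → Finset ℕ) (a b : ℕ) : Prop :=
  ∀ u : Fin k → ℕ, (∀ j, u j ∈ S j) → chi (insert a (insert b (univ.image u))) = true

lemma pairPositive_comm {k : ℕ} (chi : Finset ℕ → Bool) (S : Fin k → Finset ℕ) (a b : ℕ) :
    PairPositive chi S a b ↔ PairPositive chi S b a := by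
  simp only [PairPositive, insert_comm a b]

section LastBlock

variable {k : ℕ} {S : Fin (k + 1) → Finset ℕ} {chi : Finset ℕ → Bool}

lemma IsSink.eq_true_iff_pairPositive (huniq : SinksUnique k) (hS : BlocksSorted S)
    (H : IsSignotopeOn (k + 2) (univ.biUnion S) chi) {b d : ℕ} (hb : b ∈ S (Fin.last k))
    (hd : d ∈ S (Fin.last k)) (hbd : b ≠ d) {z : Fin k → ℕ}
    (hz : IsSink (fun X => chi (insert d X)) (Fin.init S) z) :
    chi (insert b (insert d (univ.image z))) = true ↔ PairPositive chi (Fin.init S) b d :=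
  ⟨fun h _ hu => hz.insert_insert_eq_true huniq hS.init H (biUnion_init_subset S)
    (mem_biUnion.2 ⟨_, mem_univ _, hd⟩) (mem_biUnion.2 ⟨_, mem_univ _, hb⟩) hbd.symm
    (hS.lt_last hd) (hS.lt_last hb) h hu, fun h => h z hz.mem⟩

lemma pairPositive_trans (huniq : SinksUnique k) (hS : BlocksSorted S)
    (H : IsSignotopeOn (k + 2) (univ.biUnion S) chi) {a b c : ℕ} (ha : a ∈ S (Fin.last k))
    (hb : b ∈ S (Fin.last k)) (hc : c ∈ S (Fin.last k)) (hab : a < b) (hbc : b < c) {z : Fin k → ℕ}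
    (hz : IsSink (fun X => chi (insert b X)) (Fin.init S) z)
    (habc : PairPositive chi (Fin.init S) a b ↔ PairPositive chi (Fin.init S) b c) :
    PairPositive chi (Fin.init S) a c ↔ PairPositive chi (Fin.init S) a b := by
  have hU : ∀ x ∈ S (Fin.last k), x ∈ univ.biUnion S :=
    fun x hx => mem_biUnion.2 ⟨_, mem_univ _, hx⟩
  have triple : ∀ u : Fin k → ℕ, (∀ j, u j ∈ Fin.init S j) →
      chi (insert b (insert c (univ.image u))) = chi (insert a (insert b (univ.image u))) →
      chi (insert a (insert c (univ.image u))) = chi (insert b (insert c (univ.image u))) :=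
    fun u hu => H.insert_eq_of_lt_of_lt
      (insert_subset (hU a ha) (insert_subset (hU b hb) (insert_subset (hU c hc)
        ((image_subset_biUnion hu).trans (biUnion_init_subset S)))))
      (by rw [hS.init.card_image hu])
      (fun h => (hS.lt_last ha _ (image_subset_biUnion hu h)).false)
      (fun h => (hS.lt_last hb _ (image_subset_biUnion hu h)).false)
      (fun h => (hS.lt_last hc _ (image_subset_biUnion hu h)).false) hab hbc
  by_cases hab' : PairPositive chi (Fin.init S) a b
  · refine iff_of_true (fun u hu => ?_) hab'
    rw [triple u hu (by rw [habc.1 hab' u hu, hab' u hu]), habc.1 hab' u hu]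
  · -- evaluate everything at the sink of the `b`-slice
    refine iff_of_false (fun hac => ?_) hab'
    have h1 : chi (insert a (insert b (univ.image z))) = false := Bool.eq_false_iff.2 fun h =>
      hab' ((hz.eq_true_iff_pairPositive huniq hS H ha hb hab.ne).1 h)
    have h2 : chi (insert b (insert c (univ.image z))) = false := Bool.eq_false_iff.2 fun h =>
      mt habc.2 hab' ((pairPositive_comm _ _ c b).1
        ((hz.eq_true_iff_pairPositive huniq hS H hc hb hbc.ne').1 (by rwa [insert_comm])))
    have := triple z hz.mem (h2.trans h1.symm)
    rw [hac z hz.mem, h2] at this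
    exact Bool.noConfusion this

lemma IsSink.not_lt_last (huniq : SinksUnique k) (hS : BlocksSorted S)
    (H : IsSignotopeOn (k + 2) (univ.biUnion S) chi) {v w : Fin (k + 1) → ℕ}
    (hv : IsSink chi S v) (hw : IsSink chi S w) : ¬v (Fin.last k) < w (Fin.last k) := by
  intro hlt
  rw [isSink_iff_init] at hv hw
  have hfalse := (hv.2.2 _ hw.2.1).2 hlt
  have htrue := (hw.1.eq_true_iff_pairPositive huniq hS H hv.2.1 hw.2.1 hlt.ne).1
    ((hw.2.2 _ hv.2.1).1 hlt) _ hv.1.mem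
  rw [insert_comm, hfalse] at htrue
  exact Bool.noConfusion htrue

end LastBlock

theorem sinksUnique : ∀ k, SinksUnique k
  | 0 => fun _ _ _ _ v w _ _ => funext fun i => i.elim0
  | k + 1 => fun S chi hS H v w hv hw => by
    have hlast : v (Fin.last k) = w (Fin.last k) :=
      le_antisymm (not_lt.1 (hw.not_lt_last (sinksUnique k) hS H hv))
        (not_lt.1 (hv.not_lt_last (sinksUnique k) hS H hw))
    have hinit : Fin.init v = Fin.init w := by
      rw [isSink_iff_init] at hv hw
      rw [hlast] at hv
      exact sinksUnique k _ _ hS.init (H.slice hS hw.2.1) _ _ hv.1 hw.1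
    rw [← Fin.snoc_init_self v, ← Fin.snoc_init_self w, hinit, hlast]

theorem exists_isSink : ∀ {k} {S : Fin k → Finset ℕ} {chi : Finset ℕ → Bool},
    BlocksSorted S → (∀ i, (S i).Nonempty) → IsSignotopeOn (k + 1) (univ.biUnion S) chi →
    ∃ v, IsSink chi S v
  | 0, _, _, _, _, _ => ⟨fun i => i.elim0, fun i => i.elim0⟩
  | k + 1, S, chi, hS, hne, H => by
    have slice : ∀ d ∈ S (Fin.last k), ∃ z, IsSink (fun X => chi (insert d X)) (Fin.init S) z :=
      fun d hd => exists_isSink hS.init (fun j => hne _) (H.slice hS hd)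
    obtain ⟨d, hdT, hd⟩ := exists_isTournamentSink (σ := PairPositive chi (Fin.init S)) (hne _)
      fun a ha b hb c hc hab hbc => pairPositive_trans (sinksUnique k) hS H ha hb hc hab hbc
        (slice b hb).choose_spec
    obtain ⟨z, hz⟩ := slice d hdT
    refine ⟨Fin.snoc z d, isSink_iff_init.2 ?_⟩
    simp only [Fin.init_snoc, Fin.snoc_last]
    refine ⟨hz, hdT, fun b hb => ⟨fun hbd => ?_, fun hdb => ?_⟩⟩
    · exact (hz.eq_true_iff_pairPositive (sinksUnique k) hS H hb hdT hbd.ne).2 ((hd b hb).1 hbd)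
    · exact Bool.eq_false_iff.2 fun h => (hd b hb).2 hdb ((pairPositive_comm _ _ b d).1
        ((hz.eq_true_iff_pairPositive (sinksUnique k) hS H hb hdT hdb.ne').1 h))

lemma blockDir_update_iff {k : ℕ} {chi : Finset ℕ → Bool} {C : Fin k → Finset ℕ}
    {v : Fin k → ℕ} {i : Fin k} {b : ℕ} (hb : b ≠ v i) :
    blockDir chi C (Function.update v i b) v ↔
      (∀ j, Function.update v i b j ∈ C j) ∧ (∀ j, v j ∈ C j) ∧
      ((b < v i ∧ chi (insert b (univ.image v)) = true) ∨
        (v i < b ∧ chi (insert b (univ.image v)) = false)) := by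
  unfold blockDir
  refine and_congr_right fun _ => and_congr_right fun _ => ⟨?_, fun h => ⟨i, ?_, ?_⟩⟩
  · rintro ⟨i', hagree, h⟩
    obtain rfl : i' = i := by
      by_contra hi
      exact hb (by simpa using hagree i (Ne.symm hi))
    simpa [insert_image_update] using h
  · exact fun j hj => Function.update_of_ne hj _ _
  · simpa [insert_image_update] using h

lemma isBlockSink_iff_isSink {k : ℕ} {chi : Finset ℕ → Bool} {C S : Fin k → Finset ℕ}
    (hS : ∀ i, S i ⊆ C i) {v : Fin k → ℕ} : IsBlockSink chi C S v ↔ IsSink chi S v := by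
  constructor
  · rintro ⟨hv, hsink⟩ i
    refine ⟨hv i, fun b hb => ?_⟩
    rcases eq_or_ne b (v i) with rfl | hbv
    · exact ⟨fun h => absurd h (lt_irrefl _), fun h => absurd h (lt_irrefl _)⟩
    have hw : ∀ j, Function.update v i b j ∈ S j :=
      (Function.forall_update_iff v fun j x => x ∈ S j).2 ⟨hb, fun j _ => hv j⟩
    have hadj : NatAdj v (Function.update v i b) :=
      ⟨i, by simpa using hbv.symm, fun j hj => (Function.update_of_ne hj _ _).symm⟩
    rcases ((blockDir_update_iff hbv).1 (hsink _ hw hadj)).2.2 with ⟨hlt, h⟩ | ⟨hlt, h⟩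
    · exact ⟨fun _ => h, fun h' => absurd hlt h'.not_gt⟩
    · exact ⟨fun h' => absurd hlt h'.not_gt, fun _ => h⟩
  · intro hsink
    refine ⟨fun i => (hsink i).1, fun w hw ⟨i, hne, hagree⟩ => ?_⟩
    have hwv : Function.update v i (w i) = w :=
      (Function.eq_update_iff.2 ⟨rfl, fun j hj => (hagree j hj).symm⟩).symm
    have h := (hsink i).2 _ (hw i)
    refine hwv ▸ (blockDir_update_iff hne.symm).2
      ⟨fun j => by rw [hwv]; exact hS j (hw j), fun j => hS j (hsink j).1, ?_⟩
    rcases lt_or_gt_of_ne hne with hlt | hlt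
    · exact Or.inr ⟨hlt, h.2 hlt⟩
    · exact Or.inl ⟨hlt, h.1 hlt⟩

/-- the orientation `O_χ` induced by a block signotope is a unique sink
orientation: every subgrid `S` (with `∅ ≠ S i ⊆ C i`) contains exactly one sink. -/
theorem blockDir_is_USO (n r : Nat) (chi : Finset Nat -> Bool)
    (C : Fin r -> Finset Nat) (hchi : IsSignotopeOn (r + 1) (Finset.Icc 1 n) chi)
    (hC : IsBlockPartition n r C)
    (S : Fin r -> Finset Nat) (hS : ∀ i, S i ⊆ C i) (hne : ∀ i, (S i).Nonempty) :
    ∃! v : Fin r -> Nat, IsBlockSink chi C S v := by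
  have hsorted : BlocksSorted S := BlocksSorted.mono hC.2 hS
  have hsig : IsSignotopeOn (r + 1) (univ.biUnion S) chi :=
    hchi.mono (hC.1 ▸ biUnion_mono fun i _ => hS i)
  obtain ⟨v, hv⟩ := exists_isSink hsorted hne hsig
  exact ⟨v, (isBlockSink_iff_isSink hS).2 hv, fun w hw =>
    sinksUnique r S chi hsorted hsig w v ((isBlockSink_iff_isSink hS).1 hw) hv⟩
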